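/- arXiv:2207.02664 — 2 statements merged into one kernel-verified Lean document; each statement's English description precedes it below -/
import Mathlib

section
/- Let Γ=(H,σ) be a signed hypergraph with normalized Laplacian L = I - D^{-1}A, where D is the diagonal degree matrix and A the signed adjacency matrix. For any two functions f, g : V → ℝ, one has ⟨fg, L(fg)⟩ = ⟨fg, f·Lg⟩ + Σ_{x,y ∈ e ∈ E} deg(x)(−L_{xy}) g(x)g(y)(f(x)−f(y))², where ⟨u,v⟩ = Σ_{i∈V} deg(i)u(i)v(i) and fg denotes the pointwise product. -/
attribute [local instance] Classical.propDecidable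

open Finset Matrix

/-! ## Signed hypergraphs (edges indexed by a type `E`; `sign v e ∈ {0, 1, -1}`,
nonzero exactly on incidences) -/

structure SignedHypergraph (V E : Type) where
  sign : V → E → ℝ
  sign_values : ∀ v e, sign v e = 0 ∨ sign v e = 1 ∨ sign v e = -1

namespace SignedHypergraph

variable {V E : Type} [Fintype V] [Fintype E] [DecidableEq V] [DecidableEq E]

/-- The vertex set of an edge. -/
noncomputable def edgeVerts (G : SignedHypergraph V E) (e : E) : Finset V :=
  Finset.univ.filter fun v => G.sign v e ≠ 0

/-- The degree of a vertex. -/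
noncomputable def deg (G : SignedHypergraph V E) (v : V) : ℕ :=
  (Finset.univ.filter fun e : E => G.sign v e ≠ 0).card

/-- The sign of an edge: `sgn e = (-1)^(|e|-1) ∏_{v ∈ e} σ(v,e)`. -/
noncomputable def edgeSign (G : SignedHypergraph V E) (e : E) : ℝ :=
  (-1 : ℝ) ^ ((G.edgeVerts e).card - 1) * ∏ v ∈ G.edgeVerts e, G.sign v e

/-- The signed adjacency matrix. -/
noncomputable def adj (G : SignedHypergraph V E) : Matrix V V ℝ :=
  Matrix.of fun x y =>
    if x = y then 0
    else ∑ e ∈ Finset.univ.filter (fun e : E => G.sign x e ≠ 0 ∧ G.sign y e ≠ 0), G.edgeSign e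

/-- The normalized Laplacian `L = I - D⁻¹ A`. -/
noncomputable def lap (G : SignedHypergraph V E) : Matrix V V ℝ :=
  Matrix.of fun x y => (if x = y then (1 : ℝ) else 0) - G.adj x y / (G.deg x : ℝ)

/-- The degree-weighted inner product `⟨f, g⟩ = ∑ v deg(v) f(v) g(v)`. -/
noncomputable def dInner (G : SignedHypergraph V E) (f g : V → ℝ) : ℝ :=
  ∑ v : V, (G.deg v : ℝ) * f v * g v

/-- Two vertices share an edge. -/
def Adjacent (G : SignedHypergraph V E) (x y : V) : Prop :=
  ∃ e : E, G.sign x e ≠ 0 ∧ G.sign y e ≠ 0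

/-- The underlying hypergraph is connected. -/
def Connected (G : SignedHypergraph V E) : Prop :=
  ∀ x y : V, Relation.ReflTransGen G.Adjacent x y

/-- One step of a strong nodal domain path: `x, y` in a common edge `e` with
`f x · sgn e · f y > 0`. -/
def sStep (G : SignedHypergraph V E) (f : V → ℝ) (x y : V) : Prop :=
  ∃ e : E, G.sign x e ≠ 0 ∧ G.sign y e ≠ 0 ∧ 0 < f x * G.edgeSign e * f y

/-- The number `𝔖(f)` of strong nodal domains: equivalence classes of the support of `f`
under joining by S-paths. -/
noncomputable def strongDomainCount (G : SignedHypergraph V E) (f : V → ℝ) : ℕ :=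
  Set.ncard {D : Set V | ∃ w, f w ≠ 0 ∧ D = {x | Relation.ReflTransGen (G.sStep f) w x}}

/-- A weak nodal domain path: a walk along edges such that any two consecutive nonzeros
`v i`, `v j` of `f` (joined through zeros by the edges `e i, …, e (j-1)`) satisfy
`f (v i) · sgn (e i) ⋯ sgn (e (j-1)) · f (v j) > 0`. -/
def IsWPath (G : SignedHypergraph V E) (f : V → ℝ) {ℓ : ℕ}
    (v : Fin (ℓ + 1) → V) (e : Fin ℓ → E) : Prop :=
  (∀ t : Fin ℓ, G.sign (v t.castSucc) (e t) ≠ 0 ∧ G.sign (v t.succ) (e t) ≠ 0) ∧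
  ∀ i j : Fin (ℓ + 1), i < j → f (v i) ≠ 0 → f (v j) ≠ 0 →
    (∀ k : Fin (ℓ + 1), i < k → k < j → f (v k) = 0) →
    0 < f (v i) *
        (∏ t : Fin ℓ, if (i : ℕ) ≤ (t : ℕ) ∧ (t : ℕ) < (j : ℕ) then G.edgeSign (e t) else 1) *
        f (v j)

/-- `x` and `y` are joined by a W-path (or equal). -/
def wRel (G : SignedHypergraph V E) (f : V → ℝ) (x y : V) : Prop :=
  x = y ∨ ∃ (ℓ : ℕ) (v : Fin (ℓ + 1) → V) (e : Fin ℓ → E),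
    G.IsWPath f v e ∧ v 0 = x ∧ v (Fin.last ℓ) = y

/-- The weak nodal domain of a vertex `w` in the support of `f`: the equivalence class
of `w` under the W-path relation on the support, enlarged by the zero vertices
W-path-connected to it. -/
def weakDomain (G : SignedHypergraph V E) (f : V → ℝ) (w : V) : Set V :=
  {x | ∃ y, f y ≠ 0 ∧ G.wRel f w y ∧ G.wRel f x y}

def IsWeakNodalDomain (G : SignedHypergraph V E) (f : V → ℝ) (D : Set V) : Prop :=
  ∃ w, f w ≠ 0 ∧ D = G.weakDomain f w

/-- The number `𝔚(f)` of weak nodal domains. -/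
noncomputable def weakDomainCount (G : SignedHypergraph V E) (f : V → ℝ) : ℕ :=
  Set.ncard {D : Set V | G.IsWeakNodalDomain f D}

/-- The number of connected components of the subhypergraph induced on the vertex set `A`
with edges restricted to those satisfying `P`. -/
noncomputable def componentsOn (G : SignedHypergraph V E) (A : Finset V) (P : E → Prop) : ℕ :=
  Set.ncard {C : Set V | ∃ v ∈ A, C =
    {u | u ∈ A ∧ Relation.ReflTransGen
      (fun x y => x ∈ A ∧ y ∈ A ∧ ∃ e, P e ∧ G.sign x e ≠ 0 ∧ G.sign y e ≠ 0) v u}}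

/-- The cyclomatic number `l = ∑_e (|e|-1) - |V| + c` of the subhypergraph induced on `A`
with edges restricted to those satisfying `P`. -/
noncomputable def cyclomaticOn (G : SignedHypergraph V E) (A : Finset V) (P : E → Prop) : ℤ :=
  (∑ e ∈ Finset.univ.filter (fun e : E => P e ∧ (G.edgeVerts e ∩ A).Nonempty),
      (((G.edgeVerts e ∩ A).card : ℤ) - 1)) -
    (A.card : ℤ) + (G.componentsOn A P : ℤ)

/-- An edge all of whose pairs of (distinct) vertices `x, y` satisfy
`f x · sgn e · f y > 0`. -/
def posEdge (G : SignedHypergraph V E) (f : V → ℝ) (e : E) : Prop :=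
  ∀ x y : V, G.sign x e ≠ 0 → G.sign y e ≠ 0 → x ≠ y → 0 < f x * G.edgeSign e * f y

/-- An edge of the subhypergraph `S` on the support of `f`. -/
def sEdge (G : SignedHypergraph V E) (f : V → ℝ) (e : E) : Prop :=
  (∀ v, G.sign v e ≠ 0 → f v ≠ 0) ∧ G.posEdge f e

/-- The subhypergraph with edge set `P` contains a cycle. -/
def HasCycle (G : SignedHypergraph V E) (P : E → Prop) : Prop :=
  ∃ (q : ℕ) (v : Fin (q + 1) → V) (e : Fin q → E), 2 ≤ q ∧
    Function.Injective (fun t : Fin q => v t.castSucc) ∧ Function.Injective e ∧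
    v (Fin.last q) = v 0 ∧
    ∀ t : Fin q, P (e t) ∧ G.sign (v t.castSucc) (e t) ≠ 0 ∧ G.sign (v t.succ) (e t) ≠ 0

/-- A tree-like vertex: its removal increases the number of connected components
by `deg x - 1`. -/
def Treelike (G : SignedHypergraph V E) (x : V) : Prop :=
  (G.componentsOn (Finset.univ.erase x) (fun _ => True) : ℤ) =
    (G.componentsOn Finset.univ (fun _ => True) : ℤ) + (G.deg x : ℤ) - 1

/-- The Fiedler zero set of `f`: zeros `x` of `f` such that either all vertices sharing an
edge with `x` are zeros, or `x` is not tree-like. -/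
def fiedlerSet (G : SignedHypergraph V E) (f : V → ℝ) : Set V :=
  {x | f x = 0 ∧ ((∀ y, G.Adjacent x y → f y = 0) ∨ ¬ G.Treelike x)}

/-- Weak deletion of the vertices in `R`: each vertex of `R` is removed from every hyperedge
(possibly creating empty edges). -/
def weakDelete (G : SignedHypergraph V E) (R : Finset V) :
    SignedHypergraph {v : V // v ∉ R} E :=
  ⟨fun v e => G.sign v.1 e, fun v e => G.sign_values v.1 e⟩

end SignedHypergraph

/-! ## Plain hypergraphs -/

structure PlainHypergraph (V : Type) where
  verts : Finset V
  edges : Finset (Finset V)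
  edge_subset : ∀ e ∈ edges, e ⊆ verts

namespace PlainHypergraph

variable {V : Type} [DecidableEq V]

def Adjacent (H : PlainHypergraph V) (x y : V) : Prop := ∃ e ∈ H.edges, x ∈ e ∧ y ∈ e

def Connected (H : PlainHypergraph V) : Prop :=
  ∀ x ∈ H.verts, ∀ y ∈ H.verts, Relation.ReflTransGen H.Adjacent x y

/-- A cycle: an alternating closed sequence of distinct vertices and distinct edges
`v 0, e 0, v 1, e 1, …, v q = v 0` of length `q ≥ 2` with `v t, v (t+1) ∈ e t`. -/
def IsCycle (H : PlainHypergraph V) {q : ℕ} (v : Fin (q + 1) → V) (e : Fin q → Finset V) : Prop :=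
  2 ≤ q ∧ Function.Injective (fun t : Fin q => v t.castSucc) ∧ Function.Injective e ∧
    v (Fin.last q) = v 0 ∧
    ∀ t : Fin q, e t ∈ H.edges ∧ v t.castSucc ∈ e t ∧ v t.succ ∈ e t

def Acyclic (H : PlainHypergraph V) : Prop :=
  ¬ ∃ (q : ℕ) (v : Fin (q + 1) → V) (e : Fin q → Finset V), H.IsCycle v e

/-- The number of connected components. -/
noncomputable def ncomp (H : PlainHypergraph V) : ℕ :=
  Set.ncard {C : Set V | ∃ v ∈ H.verts, C = {u | Relation.ReflTransGen H.Adjacent v u}}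

/-- The cyclomatic number `l(H) = ∑_e (|e|-1) - |V| + c(H)`. -/
noncomputable def cyclomatic (H : PlainHypergraph V) : ℤ :=
  (∑ e ∈ H.edges, ((e.card : ℤ) - 1)) - (H.verts.card : ℤ) + (H.ncomp : ℤ)

def degree (H : PlainHypergraph V) (x : V) : ℕ := (H.edges.filter fun e => x ∈ e).card

/-- The subhypergraph induced by a vertex set `A`: edges `e ∩ A` for `e ∩ A ≠ ∅`. -/
def induced (H : PlainHypergraph V) (A : Finset V) : PlainHypergraph V where
  verts := H.verts ∩ A
  edges := (H.edges.filter fun e => (e ∩ A).Nonempty).image fun e => e ∩ A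
  edge_subset := by
    intro e' he'
    simp only [Finset.mem_image, Finset.mem_filter] at he'
    obtain ⟨e, ⟨heE, -⟩, rfl⟩ := he'
    intro x hx
    rcases Finset.mem_inter.mp hx with ⟨hxe, hxA⟩
    exact Finset.mem_inter.mpr ⟨H.edge_subset e heE hxe, hxA⟩

/-- A tree-like vertex: deleting it (induced subhypergraph on the remaining vertices)
increases the number of connected components by `deg x - 1`. -/
def Treelike (H : PlainHypergraph V) (x : V) : Prop :=
  ((H.induced (H.verts.erase x)).ncomp : ℤ) = (H.ncomp : ℤ) + (H.degree x : ℤ) - 1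

/-- Removal of a vertex together with all edges incident to it. -/
def deleteVert (H : PlainHypergraph V) (y : V) : PlainHypergraph V where
  verts := H.verts.erase y
  edges := H.edges.filter fun e => y ∉ e
  edge_subset := by
    intro e he
    rcases Finset.mem_filter.mp he with ⟨heE, hy⟩
    intro x hx
    exact Finset.mem_erase.mpr ⟨fun h => hy (h ▸ hx), H.edge_subset e heE hx⟩

/-- A spanning hyperforest of `H`: a maximal acyclic spanning subhypergraph. -/
def IsSpanningHyperforest (H T : PlainHypergraph V) : Prop :=
  T.verts = H.verts ∧ T.edges ⊆ H.edges ∧ T.Acyclic ∧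
    ∀ T' : PlainHypergraph V, T'.verts = H.verts → T'.edges ⊆ H.edges → T'.Acyclic →
      T.edges ⊆ T'.edges → T'.edges = T.edges

end PlainHypergraph

/-- The positive index of inertia of a real matrix: the number of positive roots of its
characteristic polynomial, counted with multiplicity. -/
noncomputable def posInertia {m : Type} [Fintype m] [DecidableEq m] (M : Matrix m m ℝ) : ℕ :=
  (M.charpoly.roots.filter fun x => 0 < x).card

/-- The bordered matrix `[[B, a], [aᵀ, b]]`. -/
def borderMatrix {n : ℕ} (B : Matrix (Fin n) (Fin n) ℝ) (a : Fin n → ℝ) (b : ℝ) :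
    Matrix (Fin n ⊕ Unit) (Fin n ⊕ Unit) ℝ :=
  Matrix.fromBlocks B (Matrix.of fun i _ => a i) (Matrix.of fun _ j => a j)
    (Matrix.of fun _ _ => b)

variable {V E : Type} [Fintype V] [Fintype E] [DecidableEq V] [DecidableEq E]

/-- Symmetrizing the double sum turns `f x (f y - f x)` into `-(f x - f y)² / 2`. -/
theorem sum_mul_mulVec_mul_of_symm {ι : Type*} [Fintype ι] (w : ι → ℝ) (L : Matrix ι ι ℝ)
    (hL : ∀ x y, w x * L x y = w y * L y x) (f g : ι → ℝ) :
    ∑ x, w x * (f x * g x) * (L *ᵥ fun v => f v * g v) x =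
      ∑ x, w x * (f x * g x) * (f x * (L *ᵥ g) x) +
        1 / 2 * ∑ x, ∑ y, w x * -L x y * g x * g y * (f x - f y) ^ 2 := by
  have hexpand : ∑ x, w x * (f x * g x) * (L *ᵥ fun v => f v * g v) x -
      ∑ x, w x * (f x * g x) * (f x * (L *ᵥ g) x) =
        ∑ x, ∑ y, w x * L x y * g x * g y * (f x * (f y - f x)) := by
    simp only [mulVec, dotProduct, mul_sum, ← sum_sub_distrib]
    exact sum_congr rfl fun x _ => sum_congr rfl fun y _ => by ring
  have hswap : ∑ x, ∑ y, w x * L x y * g x * g y * (f x * (f y - f x)) =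
      ∑ x, ∑ y, w x * L x y * g x * g y * (f y * (f x - f y)) := by
    rw [sum_comm]
    refine sum_congr rfl fun x _ => sum_congr rfl fun y _ => ?_
    linear_combination g x * g y * f y * (f x - f y) * hL y x
  have hadd : ∑ x, ∑ y, w x * L x y * g x * g y * (f x * (f y - f x)) +
      ∑ x, ∑ y, w x * L x y * g x * g y * (f y * (f x - f y)) =
        ∑ x, ∑ y, w x * -L x y * g x * g y * (f x - f y) ^ 2 := by
    rw [← sum_add_distrib]
    refine sum_congr rfl fun x _ => ?_
    rw [← sum_add_distrib]
    exact sum_congr rfl fun y _ => by ring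
  linarith

namespace SignedHypergraph

omit [DecidableEq E] in
lemma adj_comm (G : SignedHypergraph V E) (x y : V) : G.adj x y = G.adj y x := by
  by_cases hxy : x = y
  · rw [hxy]
  · simp only [adj, of_apply, if_neg hxy, if_neg (Ne.symm hxy), and_comm]

omit [DecidableEq E] in
lemma adj_eq_zero_of_deg_eq_zero (G : SignedHypergraph V E) {x : V} (hx : G.deg x = 0) (y : V) :
    G.adj x y = 0 := by
  have hsign : ∀ e, G.sign x e = 0 := by
    simpa [deg, filter_eq_empty_iff] using hx
  simp [adj, hsign]

omit [DecidableEq E] in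
/-- The junk value `0⁻¹ = 0` in `lap` is harmless: isolated vertices have zero rows in `A`. -/
lemma deg_mul_lap (G : SignedHypergraph V E) (x y : V) :
    (G.deg x : ℝ) * G.lap x y = (if x = y then (G.deg x : ℝ) else 0) - G.adj x y := by
  by_cases hx : G.deg x = 0
  · simp [hx, G.adj_eq_zero_of_deg_eq_zero hx]
  · have hx' : (G.deg x : ℝ) ≠ 0 := Nat.cast_ne_zero.mpr hx
    simp only [lap, of_apply, mul_sub, mul_div_cancel₀ _ hx', mul_ite, mul_one, mul_zero]

omit [DecidableEq E] in
lemma deg_mul_lap_comm (G : SignedHypergraph V E) (x y : V) :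
    (G.deg x : ℝ) * G.lap x y = (G.deg y : ℝ) * G.lap y x := by
  rw [deg_mul_lap, deg_mul_lap, adj_comm]
  by_cases hxy : x = y
  · rw [hxy]
  · rw [if_neg hxy, if_neg (Ne.symm hxy)]

end SignedHypergraph

theorem stmt0 (G : SignedHypergraph V E) (f g : V → ℝ) :
    G.dInner (fun v => f v * g v) (G.lap.mulVec fun v => f v * g v) =
      G.dInner (fun v => f v * g v) (fun v => f v * G.lap.mulVec g v) +
        (1 / 2) * ∑ x : V, ∑ y : V,
          (G.deg x : ℝ) * (-(G.lap x y)) * g x * g y * (f x - f y) ^ 2 :=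
  sum_mul_mulVec_mul_of_symm _ G.lap G.deg_mul_lap_comm f g
end

section
/- Let f be a nonzero function on a signed hypergraph Γ=(H,σ). Then any three pairwise distinct weak nodal domains D_1, D_2, D_3 of f satisfy D_1 ∩ D_2 ∩ D_3 = ∅. -/
attribute [local instance] Classical.propDecidable

open Finset Matrix

/-! W-paths are exactly the projections of walks in the double cover `V × {±1}` in which a
step along an edge `e` multiplies the carried sign by `sgn e` and a state `(v, s)` is allowed
only when `f v · s ≥ 0`. Hence every weak nodal domain is the projection of a connected
component of allowed states, and two domains sharing a state coincide. Over each vertex lie at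
most two allowed states, so among three domains through a vertex two must coincide. -/

theorem Relation.reflTransGen_iff_exists_fin {α : Type*} {r : α → α → Prop} {a b : α} :
    Relation.ReflTransGen r a b ↔ ∃ (n : ℕ) (p : Fin (n + 1) → α),
      p 0 = a ∧ p (Fin.last n) = b ∧ ∀ i : Fin n, r (p i.castSucc) (p i.succ) := by
  constructor
  · intro h
    induction h using Relation.ReflTransGen.head_induction_on with
    | refl => exact ⟨0, fun _ => b, rfl, rfl, Fin.elim0⟩
    | head hac _ ih =>
      obtain ⟨n, p, hp0, hpn, hp⟩ := ih
      refine ⟨n + 1, Fin.cons _ p, rfl, by rw [← Fin.succ_last, Fin.cons_succ, hpn], ?_⟩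
      intro i
      cases i using Fin.cases with
      | zero => simpa [hp0] using hac
      | succ i => simpa [← Fin.succ_castSucc] using hp i
  · rintro ⟨n, p, rfl, rfl, hp⟩
    suffices ∀ k, Relation.ReflTransGen r (p 0) (p k) from this _
    intro k
    induction k using Fin.induction with
    | zero => exact .refl
    | succ i ih => exact ih.tail (hp i)

theorem mul_nonneg_of_consecutive {ι : Type*} [LinearOrder ι] [Finite ι] {b : ι → ℝ}
    (h : ∀ i j, i < j → b i ≠ 0 → b j ≠ 0 → (∀ k, i < k → k < j → b k = 0) → 0 < b i * b j)
    (i j : ι) : 0 ≤ b i * b j := by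
  wlog hij : i ≤ j generalizing i j
  · rw [mul_comm]
    exact this j i (le_of_not_ge hij)
  induction j using WellFoundedLT.induction generalizing i with
  | ind j ih =>
    rcases eq_or_ne (b i) 0 with hi | hi
    · simp [hi]
    rcases eq_or_ne (b j) 0 with hj | hj
    · simp [hj]
    rcases hij.eq_or_lt with rfl | hij
    · exact mul_self_nonneg _
    obtain ⟨k, ⟨hik, hkj, hk⟩, hmax⟩ := Set.exists_max_image
      {k | i ≤ k ∧ k < j ∧ b k ≠ 0} id (Set.toFinite _) ⟨i, le_rfl, hij, hi⟩
    have hkj_pos : 0 < b k * b j := h k j hkj hk hj fun m hkm hmj => by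
      by_contra hm
      exact (hkm.trans_le (hmax m ⟨hik.trans hkm.le, hmj, hm⟩)).false
    have hik_nonneg : 0 ≤ b i * b k := ih k hkj i hik
    have : 0 ≤ b k * b k * (b i * b j) :=
      calc 0 ≤ b i * b k * (b k * b j) := mul_nonneg hik_nonneg hkj_pos.le
        _ = b k * b k * (b i * b j) := by ring
    exact nonneg_of_mul_nonneg_right this (mul_self_pos.2 hk)

theorem exists_abs_eq_one_forall_mul_nonneg {ι : Type*} {b : ι → ℝ}
    (h : ∀ i j, 0 ≤ b i * b j) : ∃ σ : ℝ, |σ| = 1 ∧ ∀ k, 0 ≤ σ * b k := by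
  by_cases hb : ∀ k, 0 ≤ b k
  · exact ⟨1, abs_one, fun k => by simpa using hb k⟩
  obtain ⟨k₀, hk₀⟩ := not_forall.1 hb
  refine ⟨-1, by simp, fun k => ?_⟩
  nlinarith [h k k₀, not_le.1 hk₀]

theorem eq_or_eq_or_eq_of_abs_eq_one {a b c : ℝ} (ha : |a| = 1) (hb : |b| = 1) (hc : |c| = 1) :
    a = b ∨ a = c ∨ b = c := by
  rw [abs_eq zero_le_one] at ha hb hc
  rcases ha with rfl | rfl <;> rcases hb with rfl | rfl <;> rcases hc with rfl | rfl <;> norm_num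

-- Written exactly as the product in `IsWPath`, so that the two agree definitionally.
def intervalProd {M : Type*} [CommMonoid M] {ℓ : ℕ} (g : Fin ℓ → M) (i j : ℕ) : M :=
  ∏ t : Fin ℓ, if i ≤ (t : ℕ) ∧ (t : ℕ) < j then g t else 1

section intervalProd

variable {M : Type*} [CommMonoid M] {ℓ : ℕ}

theorem intervalProd_self (g : Fin ℓ → M) (i : ℕ) : intervalProd g i i = 1 :=
  Finset.prod_eq_one fun _ _ => if_neg fun h => (h.1.trans_lt h.2).false

theorem intervalProd_succ (g : Fin ℓ → M) {i : ℕ} {t : Fin ℓ} (hit : i ≤ t) :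
    intervalProd g i (t + 1) = intervalProd g i t * g t := by
  rw [intervalProd, intervalProd, ← Fintype.prod_ite_eq' t g, ← Finset.prod_mul_distrib]
  refine Finset.prod_congr rfl fun u _ => ?_
  rcases lt_trichotomy (u : ℕ) t with hut | hut | hut
  · simp [hut, Fin.ne_of_lt hut, Nat.lt_succ_of_lt hut]
  · simp [Fin.ext hut, hit]
  · simp [hut.not_gt, Fin.ne_of_gt hut, Nat.succ_le_of_lt hut |>.not_gt]

theorem eq_mul_intervalProd {s : Fin (ℓ + 1) → M} {g : Fin ℓ → M}
    (hs : ∀ t, s t.succ = s t.castSucc * g t) {i j : Fin (ℓ + 1)} (hij : i ≤ j) :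
    s j = s i * intervalProd g i j := by
  induction j using Fin.induction with
  | zero =>
    rw [Fin.le_zero_iff.1 hij, intervalProd_self, mul_one]
  | succ t ih =>
    rcases hij.lt_or_eq with hij | rfl
    · have hit : (i : ℕ) ≤ t := Nat.lt_succ_iff.1 hij
      rw [hs, ih hit, Fin.val_succ, intervalProd_succ g hit, mul_assoc, Fin.val_castSucc]
    · rw [intervalProd_self, mul_one]

end intervalProd

theorem abs_intervalProd {ℓ : ℕ} {g : Fin ℓ → ℝ} (hg : ∀ t, |g t| = 1) (i j : ℕ) :
    |intervalProd g i j| = 1 := by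
  rw [intervalProd, Finset.abs_prod]
  exact Finset.prod_eq_one fun t _ => by split_ifs <;> simp [hg]

theorem mul_intervalProd_mul_eq {ℓ : ℕ} {s : Fin (ℓ + 1) → ℝ} {g : Fin ℓ → ℝ}
    (hs : ∀ t, s t.succ = s t.castSucc * g t) (habs : ∀ k, |s k| = 1)
    {i j : Fin (ℓ + 1)} (hij : i ≤ j) (a b : ℝ) :
    a * intervalProd g i j * b = (a * s i) * (b * s j) := by
  have hsi : s i * s i = 1 := by rw [← abs_mul_abs_self, habs, one_mul]
  rw [eq_mul_intervalProd hs hij]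
  linear_combination (-(a * intervalProd g i j * b)) * hsi

namespace SignedHypergraph

variable {V E : Type}

def SignCompatible (f : V → ℝ) (p : V × ℝ) : Prop :=
  |p.2| = 1 ∧ 0 ≤ f p.1 * p.2

theorem exists_signCompatible (f : V → ℝ) (x : V) : ∃ s, SignCompatible f (x, s) := by
  by_cases hx : 0 ≤ f x
  · exact ⟨1, abs_one, by simpa using hx⟩
  · exact ⟨-1, by simp, by simp; linarith⟩

theorem SignCompatible.mul_pos {f : V → ℝ} {x : V} {s : ℝ} (h : SignCompatible f (x, s))
    (hx : f x ≠ 0) : 0 < f x * s :=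
  h.2.lt_of_ne (mul_ne_zero hx (abs_pos.1 (h.1 ▸ one_pos))).symm

theorem SignCompatible.eq {f : V → ℝ} {x : V} {s s' : ℝ} (hx : f x ≠ 0)
    (h : SignCompatible f (x, s)) (h' : SignCompatible f (x, s')) : s = s' := by
  have hpos := h.mul_pos hx
  have hpos' := h'.mul_pos hx
  rcases (abs_eq zero_le_one).1 h.1 with rfl | rfl <;>
    rcases (abs_eq zero_le_one).1 h'.1 with rfl | rfl <;> first | rfl | (exfalso; linarith)

variable [Fintype V] {G : SignedHypergraph V E} {f : V → ℝ}

theorem abs_edgeSign (G : SignedHypergraph V E) (e : E) : |G.edgeSign e| = 1 := by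
  rw [edgeSign, abs_mul, abs_pow, abs_neg, abs_one, one_pow, one_mul, Finset.abs_prod]
  refine Finset.prod_eq_one fun v hv => ?_
  rcases G.sign_values v e with h | h | h
  · exact absurd h (Finset.mem_filter.1 hv).2
  all_goals simp [h]

theorem edgeSign_mul_self (G : SignedHypergraph V E) (e : E) :
    G.edgeSign e * G.edgeSign e = 1 := by
  rw [← abs_mul_abs_self, abs_edgeSign, one_mul]

def liftStep (G : SignedHypergraph V E) (f : V → ℝ) (p q : V × ℝ) : Prop :=
  SignCompatible f p ∧ SignCompatible f q ∧
    ∃ e, G.sign p.1 e ≠ 0 ∧ G.sign q.1 e ≠ 0 ∧ q.2 = p.2 * G.edgeSign e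

instance : Std.Symm (G.liftStep f) where
  symm := by
    rintro p q ⟨hp, hq, e, hpe, hqe, hs⟩
    exact ⟨hq, hp, e, hqe, hpe, by rw [hs, mul_assoc, edgeSign_mul_self, mul_one]⟩

theorem SignCompatible.of_reflTransGen {p q : V × ℝ} (hp : SignCompatible f p)
    (h : Relation.ReflTransGen (G.liftStep f) p q) : SignCompatible f q := by
  induction h with
  | refl => exact hp
  | tail _ hstep _ => exact hstep.2.1

theorem IsWPath.exists_signs {ℓ : ℕ} {v : Fin (ℓ + 1) → V} {e : Fin ℓ → E}
    (hw : G.IsWPath f v e) : ∃ s : Fin (ℓ + 1) → ℝ,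
      (∀ k, SignCompatible f (v k, s k)) ∧ ∀ t, s t.succ = s t.castSucc * G.edgeSign (e t) := by
  set g : Fin ℓ → ℝ := fun t => G.edgeSign (e t)
  set s₀ : Fin (ℓ + 1) → ℝ := fun k => intervalProd g 0 k
  have hrec₀ : ∀ t, s₀ t.succ = s₀ t.castSucc * g t := fun t =>
    intervalProd_succ g (Nat.zero_le _)
  have habs₀ : ∀ k, |s₀ k| = 1 := fun k => abs_intervalProd (fun t => G.abs_edgeSign _) _ _
  have hs₀ : ∀ k, s₀ k ≠ 0 := fun k => abs_pos.1 ((habs₀ k).symm ▸ one_pos)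
  -- Against `s₀ k = ∏_{t < k} sgn (e t)`, the W-path condition says that consecutive nonzero
  -- terms `f (v k) * s₀ k` have the same sign.
  have hcons : ∀ i j, i < j → f (v i) * s₀ i ≠ 0 → f (v j) * s₀ j ≠ 0 →
      (∀ k, i < k → k < j → f (v k) * s₀ k = 0) → 0 < f (v i) * s₀ i * (f (v j) * s₀ j) := by
    intro i j hij hi hj hzero
    rw [← mul_intervalProd_mul_eq hrec₀ habs₀ hij.le]
    exact hw.2 i j hij (left_ne_zero_of_mul hi) (left_ne_zero_of_mul hj) fun k hik hkj =>
      (mul_eq_zero.1 (hzero k hik hkj)).resolve_right (hs₀ k)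
  obtain ⟨σ, hσ, hσb⟩ := exists_abs_eq_one_forall_mul_nonneg (mul_nonneg_of_consecutive hcons)
  refine ⟨fun k => σ * s₀ k, fun k => ⟨by simp [abs_mul, hσ, habs₀], ?_⟩, fun t => ?_⟩
  · linarith [hσb k]
  · simp only [hrec₀, g]
    ring

theorem isWPath_iff {ℓ : ℕ} {v : Fin (ℓ + 1) → V} {e : Fin ℓ → E} :
    G.IsWPath f v e ↔ (∀ t, G.sign (v t.castSucc) (e t) ≠ 0 ∧ G.sign (v t.succ) (e t) ≠ 0) ∧
      ∃ s : Fin (ℓ + 1) → ℝ, (∀ k, SignCompatible f (v k, s k)) ∧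
        ∀ t, s t.succ = s t.castSucc * G.edgeSign (e t) := by
  refine ⟨fun hw => ⟨hw.1, hw.exists_signs⟩, ?_⟩
  rintro ⟨hinc, s, hs, hrec⟩
  refine ⟨hinc, fun i j hij hi hj _ => ?_⟩
  have habs : ∀ k, |s k| = 1 := fun k => (hs k).1
  change 0 < f (v i) * intervalProd (fun t => G.edgeSign (e t)) i j * f (v j)
  rw [mul_intervalProd_mul_eq hrec habs hij.le]
  exact mul_pos ((hs i).mul_pos hi) ((hs j).mul_pos hj)

theorem wRel_iff_exists_reflTransGen {x y : V} :
    G.wRel f x y ↔ ∃ s s', SignCompatible f (x, s) ∧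
      Relation.ReflTransGen (G.liftStep f) (x, s) (y, s') := by
  constructor
  · rintro (rfl | ⟨ℓ, v, e, hw, rfl, rfl⟩)
    · obtain ⟨s, hs⟩ := exists_signCompatible f x
      exact ⟨s, s, hs, .refl⟩
    · obtain ⟨hinc, s, hs, hrec⟩ := isWPath_iff.1 hw
      exact ⟨s 0, s (Fin.last ℓ), hs 0, Relation.reflTransGen_iff_exists_fin.2
        ⟨ℓ, fun k => (v k, s k), rfl, rfl,
          fun t => ⟨hs _, hs _, e t, (hinc t).1, (hinc t).2, hrec t⟩⟩⟩
  · rintro ⟨s, s', hs, hchain⟩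
    obtain ⟨ℓ, p, hp0, hpl, hstep⟩ := Relation.reflTransGen_iff_exists_fin.1 hchain
    choose e he using fun t => (hstep t).2.2
    refine Or.inr ⟨ℓ, fun k => (p k).1, e, isWPath_iff.2 ⟨fun t => ⟨(he t).1, (he t).2.1⟩,
      fun k => (p k).2, fun k => ?_, fun t => (he t).2.2⟩, congrArg Prod.fst hp0, congrArg Prod.fst hpl⟩
    cases k using Fin.cases with
    | zero =>
      show SignCompatible f (p 0)
      rw [hp0]
      exact hs
    | succ t => exact (hstep t).2.1

theorem wRel_symm {x y : V} (h : G.wRel f x y) : G.wRel f y x := by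
  obtain ⟨s, s', hs, hchain⟩ := wRel_iff_exists_reflTransGen.1 h
  exact wRel_iff_exists_reflTransGen.2 ⟨s', s, hs.of_reflTransGen hchain, Std.Symm.symm _ _ hchain⟩

theorem wRel_trans {x y z : V} (hy : f y ≠ 0) (hxy : G.wRel f x y) (hyz : G.wRel f y z) :
    G.wRel f x z := by
  obtain ⟨s, s', hs, hxy⟩ := wRel_iff_exists_reflTransGen.1 hxy
  obtain ⟨t, t', ht, hyz⟩ := wRel_iff_exists_reflTransGen.1 hyz
  obtain rfl : s' = t := (hs.of_reflTransGen hxy).eq hy ht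
  exact wRel_iff_exists_reflTransGen.2 ⟨s, t', hs, hxy.trans hyz⟩

theorem weakDomain_eq_of_wRel {x y : V} (hx : f x ≠ 0) (hy : f y ≠ 0) (h : G.wRel f x y) :
    G.weakDomain f x = G.weakDomain f y := by
  ext z
  constructor
  · rintro ⟨u, hu, hxu, hzu⟩
    exact ⟨u, hu, wRel_trans hx (wRel_symm h) hxu, hzu⟩
  · rintro ⟨u, hu, hyu, hzu⟩
    exact ⟨u, hu, wRel_trans hy h hyu, hzu⟩

def liftedWeakDomain (G : SignedHypergraph V E) (f : V → ℝ) (w : V) : Set (V × ℝ) :=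
  {p | SignCompatible f p ∧
    ∃ y s, f y ≠ 0 ∧ G.wRel f w y ∧ Relation.ReflTransGen (G.liftStep f) p (y, s)}

theorem exists_mem_liftedWeakDomain {w x : V} (hx : x ∈ G.weakDomain f w) :
    ∃ s, (x, s) ∈ G.liftedWeakDomain f w := by
  obtain ⟨y, hy, hwy, hxy⟩ := hx
  obtain ⟨s, s', hs, hchain⟩ := wRel_iff_exists_reflTransGen.1 hxy
  exact ⟨s, hs, y, s', hy, hwy, hchain⟩

theorem weakDomain_eq_of_mem_liftedWeakDomain {w w' : V} {p : V × ℝ} (hw : f w ≠ 0)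
    (hw' : f w' ≠ 0) (hp : p ∈ G.liftedWeakDomain f w) (hp' : p ∈ G.liftedWeakDomain f w') :
    G.weakDomain f w = G.weakDomain f w' := by
  obtain ⟨hpc, y, s, hy, hwy, hpy⟩ := hp
  obtain ⟨-, y', s', hy', hwy', hpy'⟩ := hp'
  have hyy' : G.wRel f y y' := wRel_iff_exists_reflTransGen.2
    ⟨s, s', hpc.of_reflTransGen hpy, (Std.Symm.symm _ _ hpy).trans hpy'⟩
  calc G.weakDomain f w = G.weakDomain f y := weakDomain_eq_of_wRel hw hy hwy
    _ = G.weakDomain f y' := weakDomain_eq_of_wRel hy hy' hyy'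
    _ = G.weakDomain f w' := (weakDomain_eq_of_wRel hw' hy' hwy').symm

end SignedHypergraph

variable {V E : Type} [Fintype V] [Fintype E] [DecidableEq V] [DecidableEq E]

theorem stmt3_general (G : SignedHypergraph V E) (f : V → ℝ) (D₁ D₂ D₃ : Set V)
    (h₁ : G.IsWeakNodalDomain f D₁) (h₂ : G.IsWeakNodalDomain f D₂)
    (h₃ : G.IsWeakNodalDomain f D₃) (h₁₂ : D₁ ≠ D₂) (h₁₃ : D₁ ≠ D₃) (h₂₃ : D₂ ≠ D₃) :
    D₁ ∩ D₂ ∩ D₃ = ∅ := by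
  obtain ⟨w₁, hw₁, rfl⟩ := h₁
  obtain ⟨w₂, hw₂, rfl⟩ := h₂
  obtain ⟨w₃, hw₃, rfl⟩ := h₃
  refine Set.eq_empty_iff_forall_notMem.2 fun x ⟨⟨hx₁, hx₂⟩, hx₃⟩ => ?_
  obtain ⟨s₁, hs₁⟩ := SignedHypergraph.exists_mem_liftedWeakDomain hx₁
  obtain ⟨s₂, hs₂⟩ := SignedHypergraph.exists_mem_liftedWeakDomain hx₂
  obtain ⟨s₃, hs₃⟩ := SignedHypergraph.exists_mem_liftedWeakDomain hx₃
  rcases eq_or_eq_or_eq_of_abs_eq_one hs₁.1.1 hs₂.1.1 hs₃.1.1 with rfl | rfl | rfl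
  · exact h₁₂ (SignedHypergraph.weakDomain_eq_of_mem_liftedWeakDomain hw₁ hw₂ hs₁ hs₂)
  · exact h₁₃ (SignedHypergraph.weakDomain_eq_of_mem_liftedWeakDomain hw₁ hw₃ hs₁ hs₃)
  · exact h₂₃ (SignedHypergraph.weakDomain_eq_of_mem_liftedWeakDomain hw₂ hw₃ hs₂ hs₃)

theorem stmt3 (G : SignedHypergraph V E) (f : V → ℝ) (hf : f ≠ 0) (D₁ D₂ D₃ : Set V)
    (h₁ : G.IsWeakNodalDomain f D₁) (h₂ : G.IsWeakNodalDomain f D₂)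
    (h₃ : G.IsWeakNodalDomain f D₃) (h₁₂ : D₁ ≠ D₂) (h₁₃ : D₁ ≠ D₃) (h₂₃ : D₂ ≠ D₃) :
    D₁ ∩ D₂ ∩ D₃ = ∅ :=
  stmt3_general G f D₁ D₂ D₃ h₁ h₂ h₃ h₁₂ h₁₃ h₂₃
end
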